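/- Let (X,τ), (Y,τ'), (Z,τ'') be compact Hausdorff spaces, d₀ a semi metric on X whose induced topology is weaker than τ, and F : Y × Z → X continuous. Define d₁(z,z') = sup{ d₀(F(y,z), F(y,z')) : y ∈ Y } for z,z' ∈ Z. For a state μ on C(Y,ℂ) and z ∈ Z, let φ_{μ,z} : C(X,ℂ) → ℂ be the state φ_{μ,z}(a) = μ(y ↦ a(F(y,z))). Let ρ_L(φ,ψ) = sup{ |φ(a) − ψ(a)| : a ∈ C(X,ℂ), |a(p) − a(q)| ≤ d₀(p,q) for all p,q ∈ X }. Then for all z, z' ∈ Z: d₁(z,z') = sup{ ρ_L(φ_{μ,z}, φ_{μ,z'}) : μ ∈ S(C(Y,ℂ)) }. -/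

import Mathlib

/-
For a state μ, `φ_{μ,z}(a) - φ_{μ,z'}(a) = μ(a ∘ F(·,z) - a ∘ F(·,z'))`, and states have norm one,
so this is bounded by the sup norm of `y ↦ a(F(y,z)) - a(F(y,z'))`, hence by `d₁(z,z')` when `a` is
`d₀`-Lipschitz with constant one. Conversely, for the point evaluation at `y` and the test function
`a = d₀(·, F(y,z'))`, which is continuous because `d₀` induces a weaker topology, the difference is
exactly `d₀(F(y,z), F(y,z'))`.
-/

open scoped ENNReal

noncomputable section

variable {X Y Z : Type*} [TopologicalSpace X] [CompactSpace X] [T2Space X]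
  [TopologicalSpace Y] [CompactSpace Y] [T2Space Y]
  [TopologicalSpace Z] [CompactSpace Z] [T2Space Z]

/-- A state on the C*-algebra `C(Y, ℂ)`: a continuous linear functional sending the unit to
`1` and taking nonnegative real values on positive elements `star a * a`. -/
def IsState (φ : C(Y, ℂ) →L[ℂ] ℂ) : Prop :=
  φ 1 = 1 ∧ ∀ a : C(Y, ℂ), 0 ≤ (φ (star a * a)).re ∧ (φ (star a * a)).im = 0

/-- The state `φ_{μ,z} : a ↦ μ(y ↦ a (F (y, z)))` on `C(X, ℂ)`, for `μ` a state on
`C(Y, ℂ)` and `z ∈ Z`. -/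
def phi (F : C(Y × Z, X)) (μ : C(Y, ℂ) →L[ℂ] ℂ) (z : Z) (a : C(X, ℂ)) : ℂ :=
  μ (a.comp ⟨fun y => F (y, z), by fun_prop⟩)

open scoped ComplexOrder

namespace PositiveLinearMap

variable {A : Type*} [CStarAlgebra A] [PartialOrder A] [StarOrderedRing A]

lemma apply_le_norm_mul_apply_one (f : A →ₚ[ℂ] ℂ) {x : A} (hx : IsSelfAdjoint x) :
    f x ≤ ‖x‖ * f 1 := by
  simpa [Algebra.algebraMap_eq_smul_one] using f.apply_le_of_isSelfAdjoint x hx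

lemma norm_apply_le (f : A →ₚ[ℂ] ℂ) (a : A) : ‖f a‖ ≤ ‖f 1‖ * ‖a‖ := by
  have h1im := (Complex.nonneg_iff.1 (f.map_nonneg zero_le_one)).2
  have hbound {x : A} (hx : IsSelfAdjoint x) : (f x).re ≤ ‖f 1‖ * ‖x‖ ∧ (f x).im = 0 := by
    obtain ⟨hre, him⟩ := Complex.le_def.1 (f.apply_le_norm_mul_apply_one hx)
    rw [← Complex.re_eq_norm.2 (f.map_nonneg zero_le_one)]
    simp only [Complex.re_ofReal_mul, Complex.im_ofReal_mul, ← h1im, mul_zero] at hre him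
    exact ⟨by linarith, him⟩
  -- Rotate `a` so that `f` takes the value `‖f a‖` on it; then only its real part contributes.
  obtain ⟨c, hc, hca⟩ := Complex.exists_norm_eq_mul_self (f a)
  set b := c • a
  have hdecomp : f b = f (realPart b) + Complex.I * f (imaginaryPart b) := by
    conv_lhs => rw [← realPart_add_I_smul_imaginaryPart b]
    rw [map_add, map_smul f, smul_eq_mul]
  calc ‖f a‖ = (f b).re := by rw [map_smul, smul_eq_mul, ← hca, Complex.ofReal_re]
    _ = (f (realPart b)).re := by simp [hdecomp, (hbound (imaginaryPart b).2).2]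
    _ ≤ ‖f 1‖ * ‖realPart b‖ := (hbound (realPart b).2).1
    _ ≤ ‖f 1‖ * ‖a‖ := by
      gcongr
      simpa [b, norm_smul, hc] using realPart.norm_le b

end PositiveLinearMap

section State

variable {K : Type*} [TopologicalSpace K]

lemma isState_iff (φ : C(K, ℂ) →L[ℂ] ℂ) :
    IsState φ ↔ φ 1 = 1 ∧ ∀ a : C(K, ℂ), 0 ≤ φ (star a * a) := by
  simp only [IsState, Complex.nonneg_iff, eq_comm (a := (0 : ℝ))]

lemma IsState.norm_apply_le [CompactSpace K] {φ : C(K, ℂ) →L[ℂ] ℂ} (hφ : IsState φ)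
    (b : C(K, ℂ)) : ‖φ b‖ ≤ ‖b‖ := by
  obtain ⟨hφ1, hφpos⟩ := (isState_iff φ).1 hφ
  let f : C(K, ℂ) →ₚ[ℂ] ℂ := .mk₀ φ.toLinearMap fun x hx => by
    obtain ⟨a, rfl⟩ := CStarAlgebra.nonneg_iff_eq_star_mul_self.1 hx
    exact hφpos a
  calc ‖φ b‖ ≤ ‖φ 1‖ * ‖b‖ := f.norm_apply_le b
    _ = ‖b‖ := by rw [hφ1, norm_one, one_mul]

lemma isState_evalCLM (y : K) : IsState (ContinuousMap.evalCLM ℂ y) :=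
  (isState_iff _).2 ⟨rfl, fun a => star_mul_self_nonneg (a y)⟩

end State

section Semimetric

variable {T : Type*} {d : T → T → ℝ}

lemma abs_sub_semidist_le (hsymm : ∀ x y, d x y = d y x)
    (htri : ∀ x y z, d x z ≤ d x y + d y z) (x p q : T) : |d p x - d q x| ≤ d p q := by
  rw [abs_sub_le_iff]
  exact ⟨by linarith [htri p q x], by linarith [htri q p x, hsymm q p]⟩

lemma continuous_semidist_left [TopologicalSpace T] (hsymm : ∀ x y, d x y = d y x)
    (htri : ∀ x y z, d x z ≤ d x y + d y z)
    (hweaker : ∀ (x : T) (ε : ℝ), 0 < ε → ∃ U : Set T, IsOpen U ∧ x ∈ U ∧ ∀ y ∈ U, d x y < ε)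
    (x : T) : Continuous (d · x) := by
  refine continuous_iff_continuousAt.2 fun p => Metric.tendsto_nhds.2 fun ε hε => ?_
  obtain ⟨U, hU, hpU, hd⟩ := hweaker p ε hε
  filter_upwards [hU.mem_nhds hpU] with q hq
  rw [Real.dist_eq, abs_sub_comm]
  exact (abs_sub_semidist_le hsymm htri x p q).trans_lt (hd q hq)

lemma exists_continuousMap_eq_semidist [TopologicalSpace T] (hsymm : ∀ x y, d x y = d y x)
    (htri : ∀ x y z, d x z ≤ d x y + d y z)
    (hweaker : ∀ (x : T) (ε : ℝ), 0 < ε → ∃ U : Set T, IsOpen U ∧ x ∈ U ∧ ∀ y ∈ U, d x y < ε)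
    (x : T) : ∃ a : C(T, ℂ), (∀ p q, ‖a p - a q‖ ≤ d p q) ∧ ∀ p, a p = d p x := by
  have hcont := Complex.continuous_ofReal.comp (continuous_semidist_left hsymm htri hweaker x)
  refine ⟨⟨fun p => (d p x : ℂ), hcont⟩, fun p q => ?_, fun p => rfl⟩
  simpa [← Complex.ofReal_sub] using abs_sub_semidist_le hsymm htri x p q

end Semimetric

section Phi

variable {α β γ : Type*} [TopologicalSpace α] [TopologicalSpace β] [TopologicalSpace γ]

lemma phi_evalCLM (F : C(β × γ, α)) (y : β) (z : γ) (a : C(α, ℂ)) :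
    phi F (ContinuousMap.evalCLM ℂ y) z a = a (F (y, z)) :=
  rfl

lemma enorm_phi_sub_le [CompactSpace β] (F : C(β × γ, α)) {μ : C(β, ℂ) →L[ℂ] ℂ}
    (hμ : IsState μ) {d : α → α → ℝ} {a : C(α, ℂ)} (ha : ∀ p q, ‖a p - a q‖ ≤ d p q)
    (z z' : γ) :
    ‖phi F μ z a - phi F μ z' a‖ₑ ≤ ⨆ y, ENNReal.ofReal (d (F (y, z)) (F (y, z'))) := by
  set b := a.comp ⟨fun y => F (y, z), by fun_prop⟩ - a.comp ⟨fun y => F (y, z'), by fun_prop⟩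
  calc ‖phi F μ z a - phi F μ z' a‖ₑ = ‖μ b‖ₑ := by rw [map_sub]; rfl
    _ ≤ ‖b‖ₑ := enorm_le_iff_norm_le.2 (hμ.norm_apply_le b)
    _ = ⨆ y, ‖b y‖ₑ := ContinuousMap.enorm_eq_iSup_enorm b
    _ ≤ _ := iSup_mono fun y => by
      rw [← ofReal_norm]
      exact ENNReal.ofReal_le_ofReal (ha _ _)

end Phi

theorem d1_eq_sup_rhoL_general (d₀ : X → X → ℝ)
    (d₀_refl : ∀ x, d₀ x x = 0)
    (d₀_symm : ∀ x y, d₀ x y = d₀ y x)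
    (d₀_triangle : ∀ x y z, d₀ x z ≤ d₀ x y + d₀ y z)
    (hweaker : ∀ (x : X) (ε : ℝ), 0 < ε →
      ∃ U : Set X, IsOpen U ∧ x ∈ U ∧ ∀ y ∈ U, d₀ x y < ε)
    (F : C(Y × Z, X)) :
    ∀ z z' : Z,
      (⨆ y : Y, ENNReal.ofReal (d₀ (F (y, z)) (F (y, z')))) =
        ⨆ μ : {φ : C(Y, ℂ) →L[ℂ] ℂ // IsState φ},
          ⨆ a ∈ {a : C(X, ℂ) | ∀ p q : X, ‖a p - a q‖ ≤ d₀ p q},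
            (‖phi F μ.1 z a - phi F μ.1 z' a‖₊ : ℝ≥0∞) := by
  intro z z'
  simp only [← enorm_eq_nnnorm]
  refine le_antisymm (iSup_le fun y => ?_) (iSup_le fun μ => iSup₂_le fun a ha => ?_)
  · obtain ⟨a, ha, ha_eq⟩ :=
      exists_continuousMap_eq_semidist d₀_symm d₀_triangle hweaker (F (y, z'))
    refine le_iSup_of_le ⟨_, isState_evalCLM y⟩ (le_iSup₂_of_le a ha ?_)
    rw [phi_evalCLM, phi_evalCLM, ha_eq, ha_eq, d₀_refl, Complex.ofReal_zero, sub_zero,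
      ← ofReal_norm, Complex.norm_real, Real.norm_eq_abs]
    exact ENNReal.ofReal_le_ofReal (le_abs_self _)
  · exact enorm_phi_sub_le F μ.2 ha z z'

/-- part of the Theorem of Section 4 of the paper.  Let `X, Y, Z` be
compact Hausdorff spaces, `d₀` a semi metric on `X` whose induced topology is weaker than the
topology of `X`, and `F : Y × Z → X` continuous.  Define
`d₁(z, z') = sup_y d₀(F(y,z), F(y,z'))`.  Then `d₁(z, z')` equals the supremum over states
`μ` on `C(Y, ℂ)` of the Monge–Kantorovich distance `ρ_L(φ_{μ,z}, φ_{μ,z'})`, where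
`ρ_L(φ, ψ) = sup { |φ a - ψ a| : a ∈ C(X, ℂ), |a p - a q| ≤ d₀ p q ∀ p q }`. -/
theorem d1_eq_sup_rhoL (d₀ : X → X → ℝ)
    (d₀_nonneg : ∀ x y, 0 ≤ d₀ x y)
    (d₀_refl : ∀ x, d₀ x x = 0)
    (d₀_symm : ∀ x y, d₀ x y = d₀ y x)
    (d₀_triangle : ∀ x y z, d₀ x z ≤ d₀ x y + d₀ y z)
    (hweaker : ∀ (x : X) (ε : ℝ), 0 < ε →
      ∃ U : Set X, IsOpen U ∧ x ∈ U ∧ ∀ y ∈ U, d₀ x y < ε)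
    (F : C(Y × Z, X)) :
    ∀ z z' : Z,
      (⨆ y : Y, ENNReal.ofReal (d₀ (F (y, z)) (F (y, z')))) =
        ⨆ μ : {φ : C(Y, ℂ) →L[ℂ] ℂ // IsState φ},
          ⨆ a ∈ {a : C(X, ℂ) | ∀ p q : X, ‖a p - a q‖ ≤ d₀ p q},
            (‖phi F μ.1 z a - phi F μ.1 z' a‖₊ : ℝ≥0∞) :=
  d1_eq_sup_rhoL_general d₀ d₀_refl d₀_symm d₀_triangle hweaker F

end
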